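/- Let n ≥ 1 and let 0 ≤ i ≤ n be integers. If λ is a mildly odd Young diagram with ht(λ) ≤ 2n − 2, then mult(λ, 2n − i) ≤ mult(λ, i). -/

import Mathlib

open scoped Classical

namespace YoungDiagram

/-- `lam / μ` is a vertical strip of length `k`: `μ ⊆ lam`, the complement consists of
exactly `k` boxes, and no two boxes of the complement lie in the same row. -/
def IsVerticalStrip (μ lam : YoungDiagram) (k : ℕ) : Prop :=
  μ ≤ lam ∧ (lam.cells \ μ.cells).card = k ∧
    ∀ c₁ ∈ lam.cells \ μ.cells, ∀ c₂ ∈ lam.cells \ μ.cells, c₁.1 = c₂.1 → c₁ = c₂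

/-- Every column of `μ` has even length. -/
def HasEvenColumns (μ : YoungDiagram) : Prop := ∀ j, Even (μ.colLen j)

/-- `mult lam k` is the number of subdiagrams `μ ⊆ lam` with even columns such that
`lam / μ` is a vertical strip of length `k`. -/
noncomputable def mult (lam : YoungDiagram) (k : ℕ) : ℕ :=
  Nat.card {μ : YoungDiagram // μ ≤ lam ∧ μ.HasEvenColumns ∧ IsVerticalStrip μ lam k}

/-- The height of a Young diagram: the number of nonempty rows. -/
def ht (lam : YoungDiagram) : ℕ := lam.colLen 0

/-- A Young diagram is mildly odd if for every odd `m` it has at most one column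
of length exactly `m`. -/
def MildlyOdd (lam : YoungDiagram) : Prop :=
  ∀ m : ℕ, Odd m → ∀ j₁ j₂ : ℕ, lam.colLen j₁ = m → lam.colLen j₂ = m → j₁ = j₂

/-- The number of columns of odd length. -/
noncomputable def oddColumns (lam : YoungDiagram) : ℕ :=
  ((Finset.range (lam.rowLen 0)).filter fun j => Odd (lam.colLen j)).card

/-- The profile of a Young diagram: for the distinct nonzero row lengths
`ℓ₀ > ℓ₁ > … > ℓₙ`, the list of multiplicities `hᵢ = #{rows of length ℓᵢ}`. -/
noncomputable def profile (lam : YoungDiagram) : List ℕ :=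
  lam.rowLens.dedup.map fun ℓ => lam.rowLens.count ℓ

/-- Every entry of the profile is even. -/
def HasEvenProfile (lam : YoungDiagram) : Prop := ∀ h ∈ lam.profile, Even h

end YoungDiagram

/-! ### Auxiliary machinery: coefficient counting for products of symmetric factors -/

section CntMachinery

open Finset

/-- coefficient count for product of `X^e (1 + X^2 + ... + X^{2m})` factors -/
def cnt : List (ℕ × ℕ) → ℤ → ℕ
  | [], k => if k = 0 then 1 else 0
  | (em :: P), k => ∑ t ∈ Finset.range (em.2 + 1), cnt P (k - em.1 - 2 * t)

/-- twice the center of symmetry: `∑ (2 e + 2 m)` -/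
def ctr (P : List (ℕ × ℕ)) : ℤ := (P.map fun em => 2 * (em.1 : ℤ) + 2 * em.2).sum

lemma cnt_nil (k : ℤ) : cnt [] k = if k = 0 then 1 else 0 := rfl

lemma cnt_cons (e m : ℕ) (P : List (ℕ × ℕ)) (k : ℤ) :
    cnt ((e, m) :: P) k = ∑ t ∈ Finset.range (m + 1), cnt P (k - e - 2 * t) := rfl

lemma ctr_nil : ctr [] = 0 := rfl

lemma ctr_cons (e m : ℕ) (P : List (ℕ × ℕ)) : ctr ((e, m) :: P) = 2 * e + 2 * m + ctr P := by
  simp [ctr]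

lemma ctr_even (P : List (ℕ × ℕ)) : 2 ∣ ctr P := by
  induction P with
  | nil => simp [ctr_nil]
  | cons em P ih => obtain ⟨e, m⟩ := em; rw [ctr_cons]; omega

/-- symmetry of coefficients about the center -/
lemma cnt_sym (P : List (ℕ × ℕ)) (k : ℤ) : cnt P (ctr P - k) = cnt P k := by
  induction P generalizing k with
  | nil =>
    simp only [cnt_nil, ctr_nil]
    congr 1
    simp only [eq_iff_iff]
    omega
  | cons em P ih =>
    obtain ⟨e, m⟩ := em
    rw [cnt_cons, cnt_cons, ctr_cons]
    rw [← Finset.sum_range_reflect]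
    apply Finset.sum_congr rfl
    intro t ht
    simp only [Finset.mem_range] at ht
    have h1 : (↑(m + 1 - 1 - t) : ℤ) = m - t := by omega
    have h2 : (2 * ↑e + 2 * ↑m + ctr P - k - ↑e - 2 * (↑m - ↑t))
        = ctr P - (k - e - 2 * t) := by ring
    rw [h1, h2, ih]

/-- the step inequality, given unimodality of the tail -/
lemma cnt_step (e m : ℕ) (P : List (ℕ × ℕ))
    (ihP : ∀ a b : ℤ, a ≤ b → a + b ≤ ctr P → 2 ∣ b - a → cnt P a ≤ cnt P b)
    (k : ℤ) (hk : 2 * k ≤ ctr ((e, m) :: P) + 2) :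
    cnt ((e, m) :: P) (k - 2) ≤ cnt ((e, m) :: P) k := by
  rw [ctr_cons] at hk
  have key : cnt ((e, m) :: P) k + cnt P (k - e - 2 * (m + 1))
      = cnt ((e, m) :: P) (k - 2) + cnt P (k - e) := by
    have hcast : k - ↑e - 2 * ((m : ℤ) + 1) = k - ↑e - 2 * ((m + 1 : ℕ) : ℤ) := by
      push_cast; ring
    calc cnt ((e, m) :: P) k + cnt P (k - e - 2 * (m + 1))
        = (∑ t ∈ Finset.range (m + 1), cnt P (k - e - 2 * t))
            + cnt P (k - e - 2 * ((m + 1 : ℕ) : ℤ)) := by rw [cnt_cons, hcast]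
      _ = ∑ t ∈ Finset.range (m + 2), cnt P (k - e - 2 * t) :=
          (Finset.sum_range_succ (fun t : ℕ => cnt P (k - e - 2 * t)) (m + 1)).symm
      _ = (∑ t ∈ Finset.range (m + 1), cnt P (k - e - 2 * ((t + 1 : ℕ) : ℤ)))
            + cnt P (k - e - 2 * ((0 : ℕ) : ℤ)) :=
          Finset.sum_range_succ' (fun t : ℕ => cnt P (k - e - 2 * t)) (m + 1)
      _ = cnt ((e, m) :: P) (k - 2) + cnt P (k - e) := by
          rw [cnt_cons]
          congr 1
          · apply Finset.sum_congr rfl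
            intro t _
            congr 1
            push_cast
            ring
          · congr 1
            norm_num
  have hmono : cnt P (k - e - 2 * (m + 1)) ≤ cnt P (k - e) := by
    apply ihP
    · omega
    · push_cast; omega
    · exact ⟨m + 1, by ring⟩
  omega

/-- unimodality -/
lemma cnt_uni (P : List (ℕ × ℕ)) : ∀ a b : ℤ, a ≤ b → a + b ≤ ctr P → 2 ∣ b - a →
    cnt P a ≤ cnt P b := by
  induction P with
  | nil =>
    intro a b hab hsum _
    rw [ctr_nil] at hsum
    simp only [cnt_nil]
    split_ifs with h1 h2 h2 <;> omega
  | cons em P ih =>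
    obtain ⟨e, m⟩ := em
    have chain : ∀ d : ℕ, ∀ b : ℤ, 2 * b ≤ ctr ((e, m) :: P) + 2 →
        cnt ((e, m) :: P) (b - 2 * d) ≤ cnt ((e, m) :: P) b := by
      intro d
      induction d with
      | zero => intro b _; simp
      | succ d ihd =>
        intro b hb
        calc cnt ((e, m) :: P) (b - 2 * (d + 1 : ℕ))
            = cnt ((e, m) :: P) ((b - 2) - 2 * d) := by congr 1; push_cast; ring
          _ ≤ cnt ((e, m) :: P) (b - 2) := ihd (b - 2) (by omega)
          _ ≤ cnt ((e, m) :: P) b := cnt_step e m P ih b hb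
    intro a b hab hsum hdvd
    by_cases hb : 2 * b ≤ ctr ((e, m) :: P) + 2
    · obtain ⟨c, hc⟩ := hdvd
      have hc0 : 0 ≤ c := by omega
      have : a = b - 2 * c.toNat := by omega
      rw [this]
      exact chain c.toNat b hb
    · set b' := ctr ((e, m) :: P) - b with hb'
      rw [← cnt_sym ((e, m) :: P) b]
      obtain ⟨c, hc⟩ := hdvd
      have hdvd' : 2 ∣ b' - a := by
        have h1 : ctr ((e, m) :: P) = 2 * e + 2 * m + ctr P := ctr_cons e m P
        obtain ⟨c2, hc2⟩ := ctr_even P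
        omega
      obtain ⟨c', hc'⟩ := hdvd'
      have hc'0 : 0 ≤ c' := by omega
      have : a = b' - 2 * c'.toNat := by omega
      rw [this]
      exact chain c'.toNat b' (by omega)

/-- the finset of even interlacing sequences below the column list `l`, with deficit `k` -/
noncomputable def V : List ℕ → ℤ → Finset (List ℕ)
  | [], k => if k = 0 then {[]} else ∅
  | (x :: l), k =>
      ((Finset.range (x + 1)).filter fun b => Even b ∧ l.headI ≤ b).biUnion
        fun b => (V l (k - (x - b : ℕ))).image (List.cons b)

def Good : List ℕ → Prop
  | [] => True
  | (x :: l) => (l.headI + 1) / 2 ≤ x / 2 ∧ Good l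

def pr : List ℕ → List (ℕ × ℕ)
  | [] => []
  | (x :: l) => (x % 2, x / 2 - (l.headI + 1) / 2) :: pr l

lemma mem_V_cons {x : ℕ} {l : List ℕ} {k : ℤ} {bl : List ℕ} :
    bl ∈ V (x :: l) k ↔ ∃ b, (b ≤ x ∧ Even b ∧ l.headI ≤ b) ∧
      ∃ cl ∈ V l (k - (x - b : ℕ)), b :: cl = bl := by
  simp only [V, Finset.mem_biUnion, Finset.mem_filter, Finset.mem_range, Finset.mem_image]
  constructor
  · rintro ⟨b, ⟨hb, h1, h2⟩, cl, hcl, rfl⟩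
    exact ⟨b, ⟨by omega, h1, h2⟩, cl, hcl, rfl⟩
  · rintro ⟨b, ⟨hb, h1, h2⟩, cl, hcl, rfl⟩
    exact ⟨b, ⟨by omega, h1, h2⟩, cl, hcl, rfl⟩

lemma V_card (l : List ℕ) (hg : Good l) (k : ℤ) : (V l k).card = cnt (pr l) k := by
  induction l generalizing k with
  | nil => simp only [V, pr, cnt]; split_ifs <;> simp
  | cons x l ih =>
    obtain ⟨hg1, hg2⟩ := hg
    rw [show V (x :: l) k = ((Finset.range (x + 1)).filter fun b => Even b ∧ l.headI ≤ b).biUnion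
        (fun b => (V l (k - (x - b : ℕ))).image (List.cons b)) from rfl]
    rw [Finset.card_biUnion]
    · have himg : ∀ b ∈ (Finset.range (x + 1)).filter (fun b => Even b ∧ l.headI ≤ b),
          ((V l (k - (x - b : ℕ))).image (List.cons b)).card = cnt (pr l) (k - (x - b : ℕ)) := by
        intro b _
        rw [Finset.card_image_of_injective _ (fun a b h => by injection h), ih hg2]
      rw [Finset.sum_congr rfl himg]
      rw [show pr (x :: l) = (x % 2, x / 2 - (l.headI + 1) / 2) :: pr l from rfl, cnt_cons]
      apply Finset.sum_nbij' (fun b => (x - b) / 2) (fun t => x - x % 2 - 2 * t)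
      · intro b hb
        simp only [Finset.mem_filter, Finset.mem_range] at hb
        obtain ⟨hb1, hb2, hb3⟩ := hb
        rw [Nat.even_iff] at hb2
        simp only [Finset.mem_range]
        omega
      · intro t ht
        simp only [Finset.mem_range] at ht
        simp only [Finset.mem_filter, Finset.mem_range]
        refine ⟨by omega, ?_, by omega⟩
        rw [Nat.even_iff]
        omega
      · intro b hb
        simp only [Finset.mem_filter, Finset.mem_range] at hb
        obtain ⟨hb1, hb2, hb3⟩ := hb
        rw [Nat.even_iff] at hb2
        omega
      · intro t ht
        simp only [Finset.mem_range] at ht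
        omega
      · intro b hb
        simp only [Finset.mem_filter, Finset.mem_range] at hb
        obtain ⟨hb1, hb2, hb3⟩ := hb
        rw [Nat.even_iff] at hb2
        congr 1
        omega
    · intro b1 h1 b2 h2 hne
      simp only [Finset.disjoint_left, Finset.mem_image]
      rintro a ⟨c1, _, rfl⟩ ⟨c2, _, h⟩
      injection h with h1 h2
      exact hne h1.symm

lemma headI_eq_getD (l : List ℕ) : l.headI = l.getD 0 0 := by cases l <;> rfl

lemma V_mem_iff (l : List ℕ) (k : ℤ) (bl : List ℕ) :
    bl ∈ V l k ↔ bl.length = l.length ∧ (∀ i, Even (bl.getD i 0)) ∧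
      (∀ i, l.getD (i + 1) 0 ≤ bl.getD i 0) ∧ (∀ i, bl.getD i 0 ≤ l.getD i 0) ∧
      (∑ i ∈ Finset.range l.length, ((l.getD i 0 : ℤ) - bl.getD i 0)) = k := by
  induction l generalizing k bl with
  | nil =>
    show bl ∈ (if k = 0 then {[]} else ∅ : Finset (List ℕ)) ↔ _
    split_ifs with hk
    · subst hk
      simp only [Finset.mem_singleton]
      constructor
      · rintro rfl
        refine ⟨rfl, fun i => by simp [List.getD], fun i => by simp [List.getD],
          fun i => by simp [List.getD], by simp⟩
      · rintro ⟨hlen, -, -, -, -⟩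
        exact List.eq_nil_of_length_eq_zero hlen
    · simp only [Finset.notMem_empty, false_iff]
      rintro ⟨hlen, -, -, -, hsum⟩
      simp at hsum
      exact hk hsum.symm
  | cons x l ih =>
    cases bl with
    | nil =>
      rw [mem_V_cons]
      constructor
      · rintro ⟨b, -, cl, -, h⟩
        exact absurd h (by simp)
      · rintro ⟨h, -⟩
        simp at h
    | cons b cl =>
      rw [mem_V_cons]
      constructor
      · rintro ⟨b', ⟨hbx, hbe, hbh⟩, cl', hcl', heq⟩
        injection heq with h1 h2
        subst h1; subst h2
        obtain ⟨hlen, hev, hint, hup, hsum⟩ := (ih _ _).mp hcl'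
        refine ⟨by simp [hlen], ?_, ?_, ?_, ?_⟩
        · intro i
          cases i with
          | zero => simpa using hbe
          | succ i => simpa using hev i
        · intro i
          cases i with
          | zero => cases l <;> simpa using hbh
          | succ i => simpa using hint i
        · intro i
          cases i with
          | zero => simpa using hbx
          | succ i => simpa using hup i
        · rw [List.length_cons, Finset.sum_range_succ']
          simp only [List.getD_cons_succ, List.getD_cons_zero]
          rw [hsum]
          omega
      · rintro ⟨hlen, hev, hint, hup, hsum⟩
        have hbx : b ≤ x := by simpa using hup 0
        have hbe : Even b := by simpa using hev 0
        have hbh : l.headI ≤ b := by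
          cases l with
          | nil => simp
          | cons y l' => simpa using hint 0
        refine ⟨b, ⟨hbx, hbe, hbh⟩, cl, (ih _ _).mpr ⟨by simpa using hlen,
          fun i => by simpa using hev (i + 1), fun i => by simpa using hint (i + 1),
          fun i => by simpa using hup (i + 1), ?_⟩, rfl⟩
        rw [List.length_cons, Finset.sum_range_succ'] at hsum
        simp only [List.getD_cons_succ, List.getD_cons_zero] at hsum
        omega

lemma good_of (l : List ℕ) (h : ∀ i, (l.getD (i + 1) 0 + 1) / 2 ≤ l.getD i 0 / 2) : Good l := by
  induction l with
  | nil => trivial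
  | cons x l ih =>
    constructor
    · have := h 0
      simp only [List.getD_cons_succ, List.getD_cons_zero] at this
      rwa [headI_eq_getD]
    · exact ih fun i => by simpa using h (i + 1)

lemma ctr_pr (l : List ℕ) (hg : Good l) :
    ctr (pr l) = ((l.headI + l.headI % 2 : ℕ) : ℤ) := by
  induction l with
  | nil => simp [pr, ctr_nil]
  | cons x l ih =>
    obtain ⟨hg1, hg2⟩ := hg
    rw [show pr (x :: l) = (x % 2, x / 2 - (l.headI + 1) / 2) :: pr l from rfl, ctr_cons, ih hg2]
    simp only [List.headI_cons]
    omega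

end CntMachinery

/-! ### Young diagram lemmas -/

namespace YoungDiagram

lemma colLen_le_of_le {μ lam : YoungDiagram} (h : μ ≤ lam) (j : ℕ) :
    μ.colLen j ≤ lam.colLen j := by
  rcases Nat.eq_zero_or_pos (μ.colLen j) with h0 | h0
  · omega
  · have h1 : (μ.colLen j - 1, j) ∈ μ := mem_iff_lt_colLen.mpr (by omega)
    have h2 : (μ.colLen j - 1, j) ∈ lam := h h1
    rw [mem_iff_lt_colLen] at h2
    omega

lemma le_of_colLen_le {μ lam : YoungDiagram} (h : ∀ j, μ.colLen j ≤ lam.colLen j) :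
    μ ≤ lam := by
  intro c hc
  obtain ⟨i, j⟩ := c
  rw [mem_iff_lt_colLen] at hc ⊢
  exact lt_of_lt_of_le hc (h j)

lemma eq_of_colLen {μ ν : YoungDiagram} (h : ∀ j, μ.colLen j = ν.colLen j) : μ = ν :=
  le_antisymm (le_of_colLen_le fun j => (h j).le) (le_of_colLen_le fun j => (h j).ge)

lemma colLen_eq_zero' {lam : YoungDiagram} {j : ℕ} (h : lam.rowLen 0 ≤ j) :
    lam.colLen j = 0 := by
  by_contra h'
  have h1 : (0, j) ∈ lam := mem_iff_lt_colLen.mpr (by omega)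
  rw [mem_iff_lt_rowLen] at h1
  omega

lemma colLen_eq_of_iff {μ : YoungDiagram} {j c : ℕ} (h : ∀ i, (i, j) ∈ μ ↔ i < c) :
    μ.colLen j = c := by
  have h2 : ∀ i, i < μ.colLen j ↔ i < c := fun i => mem_iff_lt_colLen.symm.trans (h i)
  rcases Nat.lt_trichotomy (μ.colLen j) c with h' | h' | h'
  · exact absurd ((h2 _).mpr h') (lt_irrefl _)
  · exact h'
  · exact absurd ((h2 _).mp h') (lt_irrefl _)

lemma card_cells_eq {μ lam : YoungDiagram} (h : μ ≤ lam) :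
    μ.cells.card = ∑ j ∈ Finset.range (lam.rowLen 0), μ.colLen j := by
  have hU : μ.cells = (Finset.range (lam.rowLen 0)).biUnion (fun j => μ.col j) := by
    ext c
    obtain ⟨i, j⟩ := c
    simp only [Finset.mem_biUnion, Finset.mem_range, mem_col_iff, mem_cells]
    constructor
    · intro hc
      have h0 : (0, j) ∈ lam := h (μ.up_left_mem (Nat.zero_le i) le_rfl hc)
      rw [mem_iff_lt_rowLen] at h0
      exact ⟨j, h0, hc, rfl⟩
    · rintro ⟨j', _, hc, rfl⟩
      exact hc
  rw [hU, Finset.card_biUnion]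
  · exact Finset.sum_congr rfl fun j _ => (μ.colLen_eq_card).symm
  · intro j1 _ j2 _ hne
    simp only [Finset.disjoint_left, mem_col_iff]
    rintro a ⟨_, rfl⟩ ⟨_, h2⟩
    exact hne h2

lemma card_sdiff_eq {μ lam : YoungDiagram} (h : μ ≤ lam) :
    (lam.cells \ μ.cells).card
      = ∑ j ∈ Finset.range (lam.rowLen 0), (lam.colLen j - μ.colLen j) := by
  rw [Finset.card_sdiff_of_subset (cells_subset_iff.mpr h), card_cells_eq h, card_cells_eq (le_refl lam),
    Finset.sum_tsub_distrib]
  intro j _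
  exact colLen_le_of_le h j

lemma mem_sdiff_iff {μ lam : YoungDiagram} {i j : ℕ} :
    (i, j) ∈ lam.cells \ μ.cells ↔ μ.colLen j ≤ i ∧ i < lam.colLen j := by
  simp only [Finset.mem_sdiff, mem_cells, mem_iff_lt_colLen, not_lt]
  tauto

lemma strip_iff_interlace {μ lam : YoungDiagram} (h : μ ≤ lam) :
    (∀ c₁ ∈ lam.cells \ μ.cells, ∀ c₂ ∈ lam.cells \ μ.cells, c₁.1 = c₂.1 → c₁ = c₂) ↔
      ∀ j, lam.colLen (j + 1) ≤ μ.colLen j := by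
  constructor
  · intro hs j
    by_contra h'
    push_neg at h'
    have h1 : (μ.colLen j, j) ∈ lam.cells \ μ.cells := by
      rw [mem_sdiff_iff]
      exact ⟨le_rfl, lt_of_lt_of_le h' (lam.colLen_anti j (j + 1) (by omega))⟩
    have h2 : (μ.colLen j, j + 1) ∈ lam.cells \ μ.cells := by
      rw [mem_sdiff_iff]
      exact ⟨μ.colLen_anti j (j + 1) (by omega), h'⟩
    have := hs _ h1 _ h2 rfl
    simp at this
  · intro hi c₁ hc₁ c₂ hc₂ hr
    obtain ⟨r₁, j₁⟩ := c₁
    obtain ⟨r₂, j₂⟩ := c₂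
    simp only at hr
    subst hr
    rw [mem_sdiff_iff] at hc₁ hc₂
    have key : ∀ j j' : ℕ, j < j' → μ.colLen j ≤ r₁ → r₁ < lam.colLen j' → False := by
      intro j j' hj hm hl
      have ha : lam.colLen j' ≤ lam.colLen (j + 1) := lam.colLen_anti (j + 1) j' (by omega)
      have hb := hi j
      omega
    rcases Nat.lt_trichotomy j₁ j₂ with h' | h' | h'
    · exact absurd (key j₁ j₂ h' hc₁.1 hc₂.2) not_false
    · rw [h']
    · exact absurd (key j₂ j₁ h' hc₂.1 hc₁.2) not_false

/-- subdiagram of `lam` obtained by truncating column `j` to length `b j` -/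
def subD (lam : YoungDiagram) (b : ℕ → ℕ) (hb : ∀ j, b (j + 1) ≤ b j) : YoungDiagram where
  cells := lam.cells.filter fun c => c.1 < b c.2
  isLowerSet := by
    rintro ⟨i1, j1⟩ ⟨i2, j2⟩ ⟨hi, hj⟩ hc
    have hba : Antitone b := antitone_nat_of_succ_le hb
    simp only [Finset.coe_filter, Set.mem_setOf_eq, mem_cells] at hc ⊢
    exact ⟨lam.isLowerSet ⟨hi, hj⟩ hc.1,
      lt_of_le_of_lt hi (lt_of_lt_of_le hc.2 (hba hj))⟩

lemma mem_subD {lam : YoungDiagram} {b : ℕ → ℕ} {hb : ∀ j, b (j + 1) ≤ b j} {i j : ℕ} :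
    (i, j) ∈ lam.subD b hb ↔ (i, j) ∈ lam ∧ i < b j := by
  show (i, j) ∈ (lam.subD b hb).cells ↔ _
  simp [subD, mem_cells]

lemma colLen_subD {lam : YoungDiagram} {b : ℕ → ℕ} {hb : ∀ j, b (j + 1) ≤ b j} {j : ℕ}
    (hle : b j ≤ lam.colLen j) : (lam.subD b hb).colLen j = b j := by
  apply colLen_eq_of_iff
  intro i
  rw [mem_subD, mem_iff_lt_colLen]
  omega

lemma subD_le {lam : YoungDiagram} {b : ℕ → ℕ} {hb : ∀ j, b (j + 1) ≤ b j} :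
    lam.subD b hb ≤ lam := by
  intro c hc
  obtain ⟨i, j⟩ := c
  exact ((mem_subD (hb := hb)).mp hc).1

end YoungDiagram

lemma getD_map_range (f : ℕ → ℕ) (w i : ℕ) :
    ((List.range w).map f).getD i 0 = if i < w then f i else 0 := by
  split_ifs with h
  · rw [List.getD_eq_getElem _ _ (by simpa using h)]
    simp
  · apply List.getD_eq_default
    simpa using not_lt.mp h

/-- the key counting identity -/
lemma YoungDiagram.mult_eq_card_V (lam : YoungDiagram) (k : ℕ) :
    lam.mult k = (V ((List.range (lam.rowLen 0)).map lam.colLen) (k : ℤ)).card := by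
  classical
  set w := lam.rowLen 0 with hw
  set al := (List.range w).map lam.colLen with hal
  have hal_getD : ∀ i, al.getD i 0 = lam.colLen i := by
    intro i
    rw [hal, getD_map_range]
    split_ifs with h
    · rfl
    · exact (YoungDiagram.colLen_eq_zero' (not_lt.mp h)).symm
  have hallen : al.length = w := by simp [hal]
  rw [YoungDiagram.mult, ← Nat.card_eq_finsetCard]
  apply Nat.card_congr
  have hmemV : ∀ (μ : YoungDiagram),
      (μ ≤ lam ∧ μ.HasEvenColumns ∧ YoungDiagram.IsVerticalStrip μ lam k) →
      ((List.range w).map μ.colLen) ∈ V al (k : ℤ) := by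
    rintro μ ⟨h1, h2, -, hcard, hrow⟩
    have hinter := (YoungDiagram.strip_iff_interlace h1).mp hrow
    rw [V_mem_iff]
    refine ⟨by simp [hallen, hal], ?_, ?_, ?_, ?_⟩
    · intro i
      rw [getD_map_range]
      split_ifs with h
      · exact h2 i
      · exact Even.zero
    · intro i
      rw [hal_getD, getD_map_range]
      split_ifs with h
      · exact hinter i
      · rw [YoungDiagram.colLen_eq_zero' (le_trans (not_lt.mp h) (by omega))]
    · intro i
      rw [hal_getD, getD_map_range]
      split_ifs with h
      · exact YoungDiagram.colLen_le_of_le h1 i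
      · exact Nat.zero_le _
    · rw [hallen]
      have hpt : ∀ i ∈ Finset.range w, ((al.getD i 0 : ℤ) - ((List.range w).map μ.colLen).getD i 0)
          = ((lam.colLen i - μ.colLen i : ℕ) : ℤ) := by
        intro i hi
        rw [Finset.mem_range] at hi
        rw [hal_getD, getD_map_range, if_pos hi,
          Nat.cast_sub (YoungDiagram.colLen_le_of_le h1 i)]
      rw [Finset.sum_congr rfl hpt, ← Nat.cast_sum, ← YoungDiagram.card_sdiff_eq h1, hcard]
  refine Equiv.ofBijective
    (fun μS => ⟨(List.range w).map μS.1.colLen, hmemV μS.1 μS.2⟩) ⟨?_, ?_⟩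
  · rintro ⟨μ, hμ⟩ ⟨ν, hν⟩ h
    simp only [Subtype.mk.injEq] at h ⊢
    apply YoungDiagram.eq_of_colLen
    intro j
    have hj := congrArg (fun l => l.getD j 0) h
    simp only [getD_map_range] at hj
    by_cases hjw : j < w
    · simpa [hjw] using hj
    · have hz : lam.colLen j = 0 := YoungDiagram.colLen_eq_zero' (not_lt.mp hjw)
      have hμz := YoungDiagram.colLen_le_of_le hμ.1 j
      have hνz := YoungDiagram.colLen_le_of_le hν.1 j
      omega
  · rintro ⟨bl, hbl⟩
    rw [V_mem_iff] at hbl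
    obtain ⟨hlen, hev, hint, hup, hsum⟩ := hbl
    set b : ℕ → ℕ := fun i => bl.getD i 0 with hbdef
    have hintc : ∀ j, lam.colLen (j + 1) ≤ b j := fun j => by
      have := hint j; rwa [hal_getD] at this
    have hupc : ∀ j, b j ≤ lam.colLen j := fun j => by
      have := hup j; rwa [hal_getD] at this
    have hb : ∀ j, b (j + 1) ≤ b j := fun j => le_trans (hupc (j + 1)) (hintc j)
    set μ := lam.subD b hb with hμdef
    have hcol : ∀ j, μ.colLen j = b j := fun j => YoungDiagram.colLen_subD (hupc j)
    have h1 : μ ≤ lam := YoungDiagram.subD_le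
    have h2 : μ.HasEvenColumns := fun j => (hcol j) ▸ hev j
    have hrow := (YoungDiagram.strip_iff_interlace h1).mpr (fun j => (hcol j) ▸ hintc j)
    have hcard : (lam.cells \ μ.cells).card = k := by
      rw [YoungDiagram.card_sdiff_eq h1]
      have hcast : ((∑ j ∈ Finset.range w, (lam.colLen j - μ.colLen j) : ℕ) : ℤ) = (k : ℤ) := by
        rw [Nat.cast_sum, ← hsum, hallen]
        apply Finset.sum_congr rfl
        intro i hi
        rw [hal_getD, hcol, Nat.cast_sub (hupc i)]
      exact_mod_cast hcast
    refine ⟨⟨μ, h1, h2, h1, hcard, hrow⟩, ?_⟩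
    apply Subtype.ext
    show (List.range w).map μ.colLen = bl
    apply List.ext_getElem (by simp [hlen, hallen])
    intro i hi1 hi2
    have hiw : i < w := by simpa using hi1
    rw [List.getElem_map, List.getElem_range, hcol i,
      show bl[i] = bl.getD i 0 from (List.getD_eq_getElem bl 0 hi2).symm]

lemma YoungDiagram.getD_colList (lam : YoungDiagram) (i : ℕ) :
    ((List.range (lam.rowLen 0)).map lam.colLen).getD i 0 = lam.colLen i := by
  rw [getD_map_range]
  split_ifs with h
  · rfl
  · exact (YoungDiagram.colLen_eq_zero' (not_lt.mp h)).symm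

/-- if `lam` is mildly odd with `ht lam ≤ 2n - 2`, then
`mult lam (2n - i) ≤ mult lam i` for `0 ≤ i ≤ n`. -/
theorem mult_le_of_small_height (n i : ℕ) (hn : 1 ≤ n) (hi : i ≤ n) (lam : YoungDiagram)
    (hmo : lam.MildlyOdd) (hht : lam.ht ≤ 2 * n - 2) :
    lam.mult (2 * n - i) ≤ lam.mult i := by
  classical
  set al := (List.range (lam.rowLen 0)).map lam.colLen with hal
  have hgood : Good al := by
    apply good_of
    intro j
    rw [hal, lam.getD_colList, lam.getD_colList]
    have hanti : lam.colLen (j + 1) ≤ lam.colLen j := lam.colLen_anti j (j + 1) (by omega)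
    have hne : lam.colLen j % 2 = 1 → lam.colLen (j + 1) ≠ lam.colLen j := by
      intro hodd heq
      have := hmo (lam.colLen j) (Nat.odd_iff.mpr hodd) j (j + 1) rfl heq
      omega
    omega
  have hmult : ∀ k : ℕ, lam.mult k = cnt (pr al) (k : ℤ) := fun k => by
    rw [lam.mult_eq_card_V, V_card al hgood]
  have hhead : al.headI = lam.ht := by
    rw [headI_eq_getD, hal, lam.getD_colList]
    rfl
  have hctr : ctr (pr al) = ((lam.ht + lam.ht % 2 : ℕ) : ℤ) := by
    rw [ctr_pr al hgood, hhead]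
  have hctr2 : ctr (pr al) ≤ 2 * (n : ℤ) - 2 := by
    rw [hctr]
    have := lam.ht
    omega
  have heven := ctr_even (pr al)
  rw [hmult, hmult]
  have hcast : ((2 * n - i : ℕ) : ℤ) = 2 * (n : ℤ) - i := by omega
  rw [hcast]
  have hsym := cnt_sym (pr al) (ctr (pr al) - (2 * (n : ℤ) - i))
  rw [show ctr (pr al) - (ctr (pr al) - (2 * (n : ℤ) - i)) = 2 * (n : ℤ) - i by ring] at hsym
  rw [hsym]
  apply cnt_uni
  · omega
  · omega
  · omega
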